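/- The unique even formal power series solution f(t) = 1 + O(t²) in even powers of t of the ODE t(16 - t²) f'''(t) + 2(16 - 3t²) f''(t) + (4ν² - 7) t f'(t) + (4ν² - 1) f(t) = 0 is the Gauss hypergeometric series f(t) = ₂F₁(1/2 - ν, 1/2 + ν; 1; t²/16) = Σ_{k≥0} ((1/2-ν)_k (1/2+ν)_k / (k!)²) t^{2k}/16^k. -/

import Mathlib

open PowerSeries

/-- The predicate that a formal power series `f(t)` satisfies the ODE
`t(16 - t²) f''' + 2(16 - 3t²) f'' + (4ν² - 7) t f' + (4ν² - 1) f = 0`. -/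
noncomputable def SatisfiesODE (ν : ℝ) (f : PowerSeries ℝ) : Prop :=
  X * (C (R := ℝ) 16 - X ^ 2) * derivativeFun (derivativeFun (derivativeFun f))
    + C (R := ℝ) 2 * (C (R := ℝ) 16 - C (R := ℝ) 3 * X ^ 2) * derivativeFun (derivativeFun f)
    + C (R := ℝ) (4 * ν ^ 2 - 7) * X * derivativeFun f
    + C (R := ℝ) (4 * ν ^ 2 - 1) * f = 0

/-- The hypergeometric series `₂F₁(1/2-ν, 1/2+ν; 1; t²/16)
= Σ_{k≥0} ((1/2-ν)_k (1/2+ν)_k /(k!)²) t^{2k}/16^k` as a formal power series in `t`. -/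
noncomputable def hypergeomSeries (ν : ℝ) : PowerSeries ℝ :=
  PowerSeries.mk fun n =>
    if n % 2 = 0 then
      (ascPochhammer ℝ (n / 2)).eval (1 / 2 - ν) * (ascPochhammer ℝ (n / 2)).eval (1 / 2 + ν)
        / (((n / 2).factorial : ℝ) ^ 2 * 16 ^ (n / 2))
    else 0

/-!
Comparing coefficients of `tⁿ`, the ODE says exactly
`16 (n+1)(n+2)² aₙ₊₂ = (n+1)((n+1)² - 4ν²) aₙ`. The factor in front of `aₙ₊₂` never vanishes,
so a solution is determined by `a₀` and `a₁`, and the hypergeometric coefficients satisfy the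
recurrence because `(1/2 - ν + k)(1/2 + ν + k) = ((2k+1)² - 4ν²)/4`.
-/

namespace PowerSeries

variable {R : Type*}

theorem coeff_X_pow_mul_iterate_derivative [CommRing R] (f : R⟦X⟧) (k n : ℕ) :
    coeff n (X ^ k * (d⁄dX R)^[k] f) = (descPochhammer R k).eval (n : R) * coeff n f := by
  rw [coeff_X_pow_mul', descPochhammer_eval_eq_descFactorial]
  split_ifs with hkn
  · obtain ⟨m, rfl⟩ := Nat.exists_eq_add_of_le' hkn
    rw [coeff_iterate_derivative, Nat.add_sub_cancel, Nat.add_descFactorial_eq_ascFactorial]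
  · rw [Nat.descFactorial_of_lt (not_le.mp hkn), Nat.cast_zero, zero_mul]

theorem eq_of_coeff_add_two_eq [Semiring R] {f g : R⟦X⟧} (step : ℕ → R → R)
    (hf : ∀ n, coeff (n + 2) f = step n (coeff n f))
    (hg : ∀ n, coeff (n + 2) g = step n (coeff n g))
    (h0 : coeff 0 f = coeff 0 g) (h1 : coeff 1 f = coeff 1 g) : f = g := by
  ext n
  induction n using Nat.twoStepInduction with
  | zero => exact h0
  | one => exact h1
  | more n ih _ => rw [hf, hg, ih]

end PowerSeries

open PowerSeries

noncomputable def odeOperator (ν : ℝ) (f : ℝ⟦X⟧) : ℝ⟦X⟧ :=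
  X * (C 16 - X ^ 2) * d⁄dX ℝ (d⁄dX ℝ (d⁄dX ℝ f))
    + C 2 * (C 16 - C 3 * X ^ 2) * d⁄dX ℝ (d⁄dX ℝ f)
    + C (4 * ν ^ 2 - 7) * X * d⁄dX ℝ f
    + C (4 * ν ^ 2 - 1) * f

theorem satisfiesODE_iff_odeOperator_eq_zero (ν : ℝ) (f : ℝ⟦X⟧) :
    SatisfiesODE ν f ↔ odeOperator ν f = 0 :=
  Iff.rfl

theorem coeff_odeOperator (ν : ℝ) (f : ℝ⟦X⟧) (n : ℕ) :
    coeff n (odeOperator ν f) = 16 * (n + 1) * (n + 2) ^ 2 * coeff (n + 2) f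
      - (n + 1) * ((n + 1) ^ 2 - 4 * ν ^ 2) * coeff n f := by
  have hXf' := coeff_X_pow_mul_iterate_derivative f 1 n
  have hX2f'' := coeff_X_pow_mul_iterate_derivative f 2 n
  have hX3f''' := coeff_X_pow_mul_iterate_derivative f 3 n
  have hXf''' := coeff_X_pow_mul_iterate_derivative ((d⁄dX ℝ)^[2] f) 1 n
  have hf'' := coeff_iterate_derivative f 2 n
  simp only [Function.iterate_succ_apply', Function.iterate_zero_apply, pow_one]
    at hXf' hX2f'' hX3f''' hXf''' hf''
  have hform : odeOperator ν f = C 16 * (X * d⁄dX ℝ (d⁄dX ℝ (d⁄dX ℝ f)))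
      + C 32 * d⁄dX ℝ (d⁄dX ℝ f) - X ^ 3 * d⁄dX ℝ (d⁄dX ℝ (d⁄dX ℝ f))
      - C 6 * (X ^ 2 * d⁄dX ℝ (d⁄dX ℝ f)) + C (4 * ν ^ 2 - 7) * (X * d⁄dX ℝ f)
      + C (4 * ν ^ 2 - 1) * f := by
    simp only [odeOperator, map_ofNat]
    ring
  rw [hform]
  simp only [map_add (coeff n), map_sub (coeff n), coeff_C_mul, hXf', hX2f'', hX3f''',
    hXf''', hf'', descPochhammer_succ_eval, descPochhammer_zero, Polynomial.eval_one,
    Nat.ascFactorial]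
  push_cast
  ring

theorem satisfiesODE_iff_coeff_add_two (ν : ℝ) (f : ℝ⟦X⟧) :
    SatisfiesODE ν f ↔ ∀ n : ℕ, coeff (n + 2) f
      = ((n + 1) ^ 2 - 4 * ν ^ 2) / (16 * (n + 2) ^ 2) * coeff n f := by
  rw [satisfiesODE_iff_odeOperator_eq_zero, PowerSeries.ext_iff]
  refine forall_congr' fun n => ?_
  rw [coeff_odeOperator, map_zero, sub_eq_zero, div_mul_eq_mul_div, eq_div_iff (by positivity)]
  constructor <;> intro h
  · apply mul_left_cancel₀ (show (n + 1 : ℝ) ≠ 0 by positivity)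
    linear_combination h
  · linear_combination (n + 1 : ℝ) * h

noncomputable def hypergeomCoeff (ν : ℝ) (k : ℕ) : ℝ :=
  (ascPochhammer ℝ k).eval (1 / 2 - ν) * (ascPochhammer ℝ k).eval (1 / 2 + ν)
    / ((k.factorial : ℝ) ^ 2 * 16 ^ k)

theorem hypergeomCoeff_zero (ν : ℝ) : hypergeomCoeff ν 0 = 1 := by
  simp [hypergeomCoeff]

theorem hypergeomCoeff_succ (ν : ℝ) (k : ℕ) :
    hypergeomCoeff ν (k + 1)
      = ((2 * k + 1) ^ 2 - 4 * ν ^ 2) / (16 * (2 * k + 2) ^ 2) * hypergeomCoeff ν k := by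
  simp only [hypergeomCoeff, ascPochhammer_succ_eval, Nat.factorial_succ]
  push_cast
  field_simp
  ring

theorem coeff_hypergeomSeries (ν : ℝ) (n : ℕ) :
    coeff n (hypergeomSeries ν) = if n % 2 = 0 then hypergeomCoeff ν (n / 2) else 0 :=
  coeff_mk _ _

theorem coeff_hypergeomSeries_add_two (ν : ℝ) (n : ℕ) :
    coeff (n + 2) (hypergeomSeries ν)
      = ((n + 1) ^ 2 - 4 * ν ^ 2) / (16 * (n + 2) ^ 2) * coeff n (hypergeomSeries ν) := by
  rw [coeff_hypergeomSeries, coeff_hypergeomSeries, Nat.add_mod_right]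
  split_ifs with hn
  · obtain ⟨k, rfl⟩ := Nat.dvd_of_mod_eq_zero hn
    rw [show (2 * k + 2) / 2 = k + 1 by omega, Nat.mul_div_cancel_left k two_pos,
      hypergeomCoeff_succ]
    push_cast
    ring
  · rw [mul_zero]

theorem satisfiesODE_hypergeomSeries (ν : ℝ) : SatisfiesODE ν (hypergeomSeries ν) :=
  (satisfiesODE_iff_coeff_add_two ν _).mpr (coeff_hypergeomSeries_add_two ν)

theorem coeff_zero_hypergeomSeries (ν : ℝ) : coeff 0 (hypergeomSeries ν) = 1 := by
  rw [coeff_hypergeomSeries, if_pos rfl, Nat.zero_div, hypergeomCoeff_zero]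

theorem coeff_hypergeomSeries_of_odd (ν : ℝ) {n : ℕ} (hn : Odd n) :
    coeff n (hypergeomSeries ν) = 0 := by
  rw [coeff_hypergeomSeries, if_neg (Nat.odd_iff.mp hn ▸ one_ne_zero)]

/-- The hypergeometric series `₂F₁(1/2-ν, 1/2+ν; 1; t²/16)` satisfies the ODE
`t(16-t²)f''' + 2(16-3t²)f'' + (4ν²-7)t f' + (4ν²-1)f = 0`, has constant term `1`, is even,
and is the unique even formal power series solution with constant term `1`. -/
theorem hypergeom_unique_even_solution (ν : ℝ) :
    (SatisfiesODE ν (hypergeomSeries ν) ∧ coeff (R := ℝ) 0 (hypergeomSeries ν) = 1 ∧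
      ∀ n, Odd n → coeff (R := ℝ) n (hypergeomSeries ν) = 0) ∧
    ∀ g : PowerSeries ℝ, SatisfiesODE ν g → coeff (R := ℝ) 0 g = 1 →
      (∀ n, Odd n → coeff (R := ℝ) n g = 0) → g = hypergeomSeries ν := by
  refine ⟨⟨satisfiesODE_hypergeomSeries ν, coeff_zero_hypergeomSeries ν,
    fun n hn => coeff_hypergeomSeries_of_odd ν hn⟩, fun g hg hg0 hgodd => ?_⟩
  refine eq_of_coeff_add_two_eq _ ((satisfiesODE_iff_coeff_add_two ν g).mp hg)
    (coeff_hypergeomSeries_add_two ν) ?_ ?_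
  · rw [hg0, coeff_zero_hypergeomSeries]
  · rw [hgodd 1 odd_one, coeff_hypergeomSeries_of_odd ν odd_one]
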